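/- arXiv:1108.1612 — 4 statements merged into one kernel-verified Lean document; each statement's English description precedes it below -/
import Mathlib

section
/- Let g : ℂP¹ → ℂP² be a morphism given by homogeneous polynomials (P, Q, R) of degree at most 3 in two variables with no common nonconstant factor, whose image lies in the irreducible conic {x₁x₂ = x₀²}. Then the polynomials P, Q, R have degree at most 2, i.e. g is a rational map of degree at most 2. -/
open MvPolynomial

noncomputable def psi : MvPolynomial (Fin 2) ℂ →+* Polynomial (MvPolynomial (Fin 2) ℂ) :=
  eval₂Hom (Polynomial.C.comp MvPolynomial.C)
    (fun i => Polynomial.C (MvPolynomial.X i) * Polynomial.X)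

lemma psi_homog {F : MvPolynomial (Fin 2) ℂ} {n : ℕ} (hF : F.IsHomogeneous n) :
    psi F = Polynomial.C F * Polynomial.X ^ n := by
  conv_lhs => rw [F.as_sum]
  rw [map_sum]
  conv_rhs => rw [F.as_sum, map_sum, Finset.sum_mul]
  refine Finset.sum_congr rfl fun a ha => ?_
  have hdeg : (a.sum fun _ e => e) = n := by
    have := hF (mem_support_iff.mp ha)
    simpa [Finsupp.weight, Finsupp.linearCombination, Finsupp.sum] using this
  rw [psi, eval₂Hom_monomial]
  simp only [RingHom.coe_comp, Function.comp_apply]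
  have : (a.prod fun i e => ((Polynomial.C (MvPolynomial.X i) * Polynomial.X :
        Polynomial (MvPolynomial (Fin 2) ℂ))) ^ e)
      = Polynomial.C (a.prod fun i e => MvPolynomial.X i ^ e) * Polynomial.X ^ n := by
    rw [Finsupp.prod]
    simp only [mul_pow, ← Polynomial.C_pow]
    rw [Finset.prod_mul_distrib, ← map_prod, Finset.prod_pow_eq_pow_sum, ← Finsupp.prod, ← hdeg]
    rfl
  rw [this, monomial_eq, map_mul]
  ring

lemma psi_natDegree {F : MvPolynomial (Fin 2) ℂ} {n : ℕ} (hF : F.IsHomogeneous n)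
    (h0 : F ≠ 0) : (psi F).natDegree = n := by
  rw [psi_homog hF]
  exact Polynomial.natDegree_C_mul_X_pow n F (by simpa using h0)

/-- A morphism `ℂP¹ → ℂP²` given by homogeneous polynomials `(P, Q, R)` of
degree `d ≤ 3` in two variables, with no common nonconstant factor and not all
zero, whose image lies in the irreducible conic `x₁x₂ = x₀²` (i.e.
`Q * R = P ^ 2`), is in fact a rational map of degree at most 2, i.e. `d ≤ 2`. -/
theorem stmt_6 (d : ℕ) (P Q R : MvPolynomial (Fin 2) ℂ)
    (hP : P.IsHomogeneous d) (hQ : Q.IsHomogeneous d) (hR : R.IsHomogeneous d)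
    (hd : d ≤ 3)
    (hne : ¬(P = 0 ∧ Q = 0 ∧ R = 0))
    (hcop : ∀ D : MvPolynomial (Fin 2) ℂ, D ∣ P → D ∣ Q → D ∣ R → IsUnit D)
    (hconic : Q * R = P ^ 2) :
    d ≤ 2 := by
  classical
  by_cases hQ0 : Q = 0
  · have hP0 : P = 0 := by
      have : P ^ 2 = 0 := by rw [← hconic, hQ0, zero_mul]
      exact pow_eq_zero_iff two_ne_zero |>.mp this
    have hR0 : R ≠ 0 := fun h => hne ⟨hP0, hQ0, h⟩
    have hu : IsUnit R := hcop R (hP0 ▸ dvd_zero R) (hQ0 ▸ dvd_zero R) dvd_rfl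
    have : (psi R).natDegree = 0 := Polynomial.natDegree_eq_zero_of_isUnit (hu.map psi)
    rw [psi_natDegree hR hR0] at this
    omega
  by_cases hR0 : R = 0
  · have hP0 : P = 0 := by
      have : P ^ 2 = 0 := by rw [← hconic, hR0, mul_zero]
      exact pow_eq_zero_iff two_ne_zero |>.mp this
    have hu : IsUnit Q := hcop Q (hP0 ▸ dvd_zero Q) dvd_rfl (hR0 ▸ dvd_zero Q)
    have : (psi Q).natDegree = 0 := Polynomial.natDegree_eq_zero_of_isUnit (hu.map psi)
    rw [psi_natDegree hQ hQ0] at this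
    omega
  have hQR : ∀ e : Associates (MvPolynomial (Fin 2) ℂ),
      e ∣ Associates.mk Q → e ∣ Associates.mk R → ¬ Prime e := by
    intro e hq hr hp
    obtain ⟨D, rfl⟩ := Associates.mk_surjective e
    rw [Associates.mk_dvd_mk] at hq hr
    have hpD : Prime D := Associates.prime_mk.mp hp
    have hDP : D ∣ P := hpD.dvd_of_dvd_pow (n := 2) (hconic ▸ hq.mul_right R)
    exact hpD.not_unit (hcop D hDP hq hr)
  have h2 : Associates.mk Q * Associates.mk R = (Associates.mk P) ^ 2 := by
    rw [Associates.mk_mul_mk, ← Associates.mk_pow, hconic]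
  obtain ⟨e, he⟩ := Associates.eq_pow_of_mul_eq_pow
    (Associates.mk_ne_zero.mpr hQ0) (Associates.mk_ne_zero.mpr hR0) hQR h2
  obtain ⟨A, rfl⟩ := Associates.mk_surjective e
  rw [← Associates.mk_pow, Associates.mk_eq_mk_iff_associated] at he
  obtain ⟨u, hu⟩ := he.symm
  -- hu : A ^ 2 * u = Q
  have hpsi : psi (A ^ 2) * psi (u : MvPolynomial (Fin 2) ℂ) = psi Q := by
    rw [← map_mul, hu]
  have hA0 : psi A ≠ 0 := by
    intro h
    have h0 : psi Q = 0 := by rw [← hpsi, map_pow, h]; ring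
    rw [psi_homog hQ] at h0
    rcases mul_eq_zero.mp h0 with h' | h'
    · exact hQ0 (by simpa using h')
    · exact absurd h' (pow_ne_zero _ Polynomial.X_ne_zero)
  have hu0 : psi (u : MvPolynomial (Fin 2) ℂ) ≠ 0 :=
    (u.isUnit.map psi).ne_zero
  have hdeg : (psi (A ^ 2) * psi (u : MvPolynomial (Fin 2) ℂ)).natDegree = d := by
    rw [hpsi, psi_natDegree hQ hQ0]
  rw [Polynomial.natDegree_mul (by rw [map_pow]; exact pow_ne_zero _ hA0) hu0,
    Polynomial.natDegree_eq_zero_of_isUnit (u.isUnit.map psi), map_pow,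
    Polynomial.natDegree_pow] at hdeg
  omega
end

section
/- Let P, Q, R ∈ ℂ[t] be polynomials of degree at most 3, not all zero, satisfying Q·R = P². Then P, Q, R have a nonconstant common factor, or all have degree at most 2. -/
open Polynomial

/-- If `P`, `Q`, `R` are complex polynomials of degree at most 3, not all zero,
with `Q * R = P ^ 2`, then either they have a nonconstant common factor, or
they all have degree at most 2. -/
theorem stmt_7 (P Q R : Polynomial ℂ)
    (hP : P.degree ≤ 3) (hQ : Q.degree ≤ 3) (hR : R.degree ≤ 3)
    (hne : ¬(P = 0 ∧ Q = 0 ∧ R = 0))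
    (h : Q * R = P ^ 2) :
    (∃ D : Polynomial ℂ, 0 < D.natDegree ∧ D ∣ P ∧ D ∣ Q ∧ D ∣ R) ∨
      (P.degree ≤ 2 ∧ Q.degree ≤ 2 ∧ R.degree ≤ 2) := by
  by_cases hc : ∃ a : ℂ, Q.eval a = 0 ∧ R.eval a = 0
  · obtain ⟨a, hQa, hRa⟩ := hc
    have hPa : P.eval a = 0 := by
      have : (P.eval a) ^ 2 = 0 := by
        rw [← eval_pow, ← h, eval_mul, hQa, hRa, mul_zero]
      exact pow_eq_zero_iff (by norm_num) |>.mp this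
    refine Or.inl ⟨X - C a, by simp, ?_, ?_, ?_⟩ <;>
      rw [dvd_iff_isRoot] <;> assumption
  · push_neg at hc
    have hcop : IsCoprime Q R := by
      rw [Polynomial.isCoprime_iff_aeval_ne_zero_of_isAlgClosed (k := ℂ) ℂ Q R]
      intro a
      by_cases hq : Q.eval a = 0
      · exact Or.inr (by simpa using hc a hq)
      · exact Or.inl (by simpa using hq)
    right
    by_cases hQ0 : Q = 0
    · have hP0 : P = 0 := by
        have : P ^ 2 = 0 := by rw [← h, hQ0, zero_mul]
        exact pow_eq_zero_iff (by norm_num) |>.mp this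
      have hRu : IsUnit R := isCoprime_zero_left.mp (hQ0 ▸ hcop)
      refine ⟨by simp [hP0], by simp [hQ0], ?_⟩
      rw [degree_eq_zero_of_isUnit hRu]; norm_num
    · by_cases hR0 : R = 0
      · have hP0 : P = 0 := by
          have : P ^ 2 = 0 := by rw [← h, hR0, mul_zero]
          exact pow_eq_zero_iff (by norm_num) |>.mp this
        have hQu : IsUnit Q := isCoprime_zero_right.mp (hR0 ▸ hcop)
        refine ⟨by simp [hP0], ?_, by simp [hR0]⟩
        rw [degree_eq_zero_of_isUnit hQu]; norm_num
      · obtain ⟨d, hd⟩ := exists_associated_pow_of_mul_eq_pow' hcop h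
        obtain ⟨e, he⟩ := exists_associated_pow_of_mul_eq_pow' hcop.symm
          (by rw [mul_comm]; exact h)
        have hP0 : P ≠ 0 := by
          intro hP0
          apply hQ0
          have := h
          rw [hP0] at this
          simpa using mul_eq_zero.mp (by simpa using this) |>.resolve_right hR0
        have hd0 : d ≠ 0 := by rintro rfl; exact hQ0 ((associated_zero_iff_eq_zero Q).mp (by simpa using hd.symm))
        have he0 : e ≠ 0 := by rintro rfl; exact hR0 ((associated_zero_iff_eq_zero R).mp (by simpa using he.symm))
        have hdQ : Q.natDegree = 2 * d.natDegree := by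
          have := (Polynomial.degree_eq_degree_of_associated hd).symm
          rw [degree_eq_natDegree hQ0, degree_eq_natDegree (pow_ne_zero 2 hd0),
            Polynomial.natDegree_pow] at this
          exact_mod_cast this
        have heR : R.natDegree = 2 * e.natDegree := by
          have := (Polynomial.degree_eq_degree_of_associated he).symm
          rw [degree_eq_natDegree hR0, degree_eq_natDegree (pow_ne_zero 2 he0),
            Polynomial.natDegree_pow] at this
          exact_mod_cast this
        have hQ3 : Q.natDegree ≤ 3 := natDegree_le_of_degree_le (by exact_mod_cast hQ)
        have hR3 : R.natDegree ≤ 3 := natDegree_le_of_degree_le (by exact_mod_cast hR)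
        have hQ2 : Q.natDegree ≤ 2 := by omega
        have hR2 : R.natDegree ≤ 2 := by omega
        have hPn : Q.natDegree + R.natDegree = 2 * P.natDegree := by
          have := congrArg natDegree h
          rwa [Polynomial.natDegree_mul hQ0 hR0, Polynomial.natDegree_pow] at this
        have hP2 : P.natDegree ≤ 2 := by omega
        exact ⟨by exact_mod_cast degree_le_of_natDegree_le hP2,
          by exact_mod_cast degree_le_of_natDegree_le hQ2,
          by exact_mod_cast degree_le_of_natDegree_le hR2⟩
end

section
/- Let p, q be coprime polynomials in two variables over ℝ with max(deg p, deg q) = d'. Then there exists a line L ⊂ ℝ² (in fact a Zariski open set of lines) such that the restrictions of p and q to L are coprime polynomials in one variable and at least one of them has degree d'. -/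
/-!
Eliminating one variable at a time (Gauss's lemma over `k[y]`, then clearing denominators),
the ideal `(p, q)` contains a nonzero polynomial `r(y)` and a nonzero polynomial `s(x)`.
On the line `t ↦ (v₀ t, b + v₁ t)` any common factor of the restrictions of `p` and `q` divides
both `s(v₀ t)` and `r(b + v₁ t)`; these have a common root only for the finitely many `b` that are
differences of roots. The coefficient of `t ^ deg p` in the restriction of `p` is its top
homogeneous component evaluated at `v`, which is nonzero for a generic direction.
-/

open Polynomial

theorem Polynomial.coeff_prod_of_forall_natDegree_le {R ι : Type*} [CommSemiring R]
    (s : Finset ι) (f : ι → R[X]) (n : ι → ℕ) (h : ∀ i ∈ s, (f i).natDegree ≤ n i) :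
    (∏ i ∈ s, f i).coeff (∑ i ∈ s, n i) = ∏ i ∈ s, (f i).coeff (n i) := by
  classical
  induction s using Finset.induction_on with
  | empty => simp
  | insert j s hj ih =>
    rw [Finset.prod_insert hj, Finset.sum_insert hj, Finset.prod_insert hj,
      coeff_mul_add_eq_of_natDegree_le (h j (by simp)), ih fun i hi => h i (by simp [hi])]
    exact (natDegree_prod_le _ _).trans (Finset.sum_le_sum fun i hi => h i (by simp [hi]))

section LineRestriction

variable {R σ : Type*} [CommSemiring R]

theorem Polynomial.natDegree_linear_pow_le (x y : R) (e : ℕ) :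
    ((C x + C y * X) ^ e).natDegree ≤ e := by
  compute_degree

theorem Polynomial.coeff_linear_pow_self (x y : R) (e : ℕ) :
    ((C x + C y * X) ^ e).coeff e = y ^ e := by
  have h : (C x + C y * X).natDegree ≤ 1 := by compute_degree
  simpa using coeff_pow_of_natDegree_le (m := e) h

noncomputable def restrictToLine (a v : σ → R) : MvPolynomial σ R →ₐ[R] R[X] :=
  MvPolynomial.aeval fun i => C (a i) + C (v i) * X

variable (a v : σ → R)

theorem restrictToLine_monomial (m : σ →₀ ℕ) (c : R) :
    restrictToLine a v (MvPolynomial.monomial m c) =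
      C c * ∏ i ∈ m.support, (C (a i) + C (v i) * X) ^ m i := by
  simp [restrictToLine, MvPolynomial.aeval_monomial, Finsupp.prod]

theorem natDegree_restrictToLine_monomial_le (m : σ →₀ ℕ) (c : R) :
    (restrictToLine a v (MvPolynomial.monomial m c)).natDegree ≤ m.degree := by
  rw [restrictToLine_monomial]
  exact (natDegree_C_mul_le _ _).trans <| (natDegree_prod_le _ _).trans <|
    Finset.sum_le_sum fun i _ => natDegree_linear_pow_le _ _ _

theorem coeff_restrictToLine_monomial (m : σ →₀ ℕ) (c : R) :
    (restrictToLine a v (MvPolynomial.monomial m c)).coeff m.degree =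
      MvPolynomial.eval v (MvPolynomial.monomial m c) := by
  rw [restrictToLine_monomial, coeff_C_mul, Finsupp.degree_apply,
    coeff_prod_of_forall_natDegree_le _ _ _ fun i _ => natDegree_linear_pow_le _ _ _]
  simp [coeff_linear_pow_self, MvPolynomial.eval_monomial, Finsupp.prod]

theorem restrictToLine_eq_sum (p : MvPolynomial σ R) :
    restrictToLine a v p =
      ∑ m ∈ p.support, restrictToLine a v (MvPolynomial.monomial m (p.coeff m)) := by
  conv_lhs => rw [← p.support_sum_monomial_coeff]
  exact map_sum _ _ _

theorem natDegree_restrictToLine_le (p : MvPolynomial σ R) :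
    (restrictToLine a v p).natDegree ≤ p.totalDegree := by
  rw [restrictToLine_eq_sum]
  exact natDegree_sum_le_of_forall_le _ _ fun m hm =>
    (natDegree_restrictToLine_monomial_le a v m _).trans (MvPolynomial.le_totalDegree hm)

theorem coeff_restrictToLine_totalDegree (p : MvPolynomial σ R) :
    (restrictToLine a v p).coeff p.totalDegree =
      MvPolynomial.eval v (MvPolynomial.homogeneousComponent p.totalDegree p) := by
  rw [restrictToLine_eq_sum, finsetSum_coeff, MvPolynomial.homogeneousComponent_apply, map_sum,
    Finset.sum_filter]
  refine Finset.sum_congr rfl fun m hm => ?_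
  split_ifs with h
  · rw [← h, coeff_restrictToLine_monomial]
  · exact coeff_eq_zero_of_natDegree_lt <| (natDegree_restrictToLine_monomial_le a v m _).trans_lt
      ((MvPolynomial.le_totalDegree hm).lt_of_ne h)

theorem natDegree_restrictToLine_eq_totalDegree {p : MvPolynomial σ R}
    (h : MvPolynomial.eval v (MvPolynomial.homogeneousComponent p.totalDegree p) ≠ 0) :
    (restrictToLine a v p).natDegree = p.totalDegree :=
  (natDegree_restrictToLine_le a v p).antisymm
    (le_natDegree_of_ne_zero (by rwa [coeff_restrictToLine_totalDegree]))

theorem restrictToLine_aeval_X (r : R[X]) (i : σ) :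
    restrictToLine a v (aeval (MvPolynomial.X i) r) = r.comp (C (a i) + C (v i) * X) := by
  rw [← aeval_algHom_apply, comp_eq_aeval]
  simp [restrictToLine]

end LineRestriction

theorem MvPolynomial.homogeneousComponent_totalDegree_ne_zero {R σ : Type*} [CommSemiring R]
    {p : MvPolynomial σ R} (hp : p ≠ 0) : homogeneousComponent p.totalDegree p ≠ 0 := by
  obtain ⟨m, hm, hmp⟩ := Finset.exists_mem_eq_sup p.support (support_nonempty.2 hp)
    fun s => s.sum fun _ e => e
  rw [← support_nonempty]
  exact ⟨m, by rw [support_homogeneousComponent, Finset.mem_filter]; exact ⟨hm, hmp.symm⟩⟩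

theorem MvPolynomial.exists_apply_ne_zero_and_eval_ne_zero {R σ : Type*} [CommRing R]
    [IsDomain R] [Infinite R] {F : MvPolynomial σ R} (hF : F ≠ 0) (i : σ) :
    ∃ v : σ → R, v i ≠ 0 ∧ eval v F ≠ 0 := by
  by_contra! h
  refine mul_ne_zero (X_ne_zero i) hF (MvPolynomial.funext fun v => ?_)
  by_cases hv : v i = 0 <;> simp [hv, h]

theorem exists_direction_natDegree_restrictToLine_eq {k σ : Type*} [Field k] [Infinite k]
    (p : MvPolynomial σ k) (i : σ) :
    ∃ v : σ → k, v i ≠ 0 ∧ ∀ a, (restrictToLine a v p).natDegree = p.totalDegree := by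
  rcases eq_or_ne p 0 with rfl | hp
  · exact ⟨fun _ => 1, one_ne_zero, by simp⟩
  obtain ⟨v, hvi, hv⟩ := MvPolynomial.exists_apply_ne_zero_and_eval_ne_zero
    (MvPolynomial.homogeneousComponent_totalDegree_ne_zero hp) i
  exact ⟨v, hvi, fun a => natDegree_restrictToLine_eq_totalDegree a v hv⟩

section FractionField

variable {R K : Type*} [CommRing R] [IsDomain R] [Field K] [Algebra R K] [IsFractionRing R K]

theorem map_primPart_integerNormalization_dvd [NormalizedGCDMonoid R] (D : K[X]) :
    (IsLocalization.integerNormalization (nonZeroDivisors R) D).primPart.map (algebraMap R K) ∣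
      D := by
  obtain ⟨c, hc, hcD⟩ := IsLocalization.integerNormalization_spec (nonZeroDivisors R) D
  rw [Algebra.smul_def, Polynomial.algebraMap_apply] at hcD
  have hc0 : algebraMap R K c ≠ 0 := IsFractionRing.to_map_ne_zero_of_mem_nonZeroDivisors hc
  refine (isUnit_C.2 hc0.isUnit).dvd_mul_left.1 ?_
  rw [← hcD]
  exact Polynomial.map_dvd _ (primPart_dvd _)

theorem IsRelPrime.map_fractionRing [NormalizedGCDMonoid R] {P Q : R[X]} (h : IsRelPrime P Q) :
    IsRelPrime (P.map (algebraMap R K)) (Q.map (algebraMap R K)) := by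
  intro D hP hQ
  rcases eq_or_ne D 0 with rfl | hD
  · have inj := Polynomial.map_injective _ (IsFractionRing.injective R K)
    rw [zero_dvd_iff, ← Polynomial.map_zero (algebraMap R K)] at hP hQ
    rw [inj hP, inj hQ] at h
    exact absurd (h dvd_rfl dvd_rfl) not_isUnit_zero
  have hdvd := map_primPart_integerNormalization_dvd (R := R) D
  refine isUnit_or_eq_zero_of_isUnit_integerNormalization_primPart hD (h ?_ ?_)
  · exact (isPrimitive_primPart _).dvd_of_fraction_map_dvd_fraction_map (hdvd.trans hP)
  · exact (isPrimitive_primPart _).dvd_of_fraction_map_dvd_fraction_map (hdvd.trans hQ)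

theorem exists_mul_add_mul_eq_C_of_isCoprime_map {P Q : R[X]}
    (h : IsCoprime (P.map (algebraMap R K)) (Q.map (algebraMap R K))) :
    ∃ (A B : R[X]) (r : R), r ≠ 0 ∧ A * P + B * Q = C r := by
  obtain ⟨A, B, hAB⟩ := h
  obtain ⟨a, ha, hA⟩ := IsLocalization.integerNormalization_spec (nonZeroDivisors R) A
  obtain ⟨b, hb, hB⟩ := IsLocalization.integerNormalization_spec (nonZeroDivisors R) B
  rw [Algebra.smul_def, Polynomial.algebraMap_apply] at hA hB
  set A' := IsLocalization.integerNormalization (nonZeroDivisors R) A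
  set B' := IsLocalization.integerNormalization (nonZeroDivisors R) B
  refine ⟨A' * C b, B' * C a, a * b, mul_ne_zero (nonZeroDivisors.ne_zero ha)
    (nonZeroDivisors.ne_zero hb), Polynomial.map_injective _ (IsFractionRing.injective R K) ?_⟩
  simp only [Polynomial.map_add, Polynomial.map_mul, Polynomial.map_C, hA, hB, map_mul]
  linear_combination (C (algebraMap R K a) * C (algebraMap R K b)) * hAB

end FractionField

theorem IsRelPrime.exists_mul_add_mul_eq_C {R : Type*} [CommRing R] [IsDomain R]
    [NormalizedGCDMonoid R] {P Q : R[X]} (h : IsRelPrime P Q) :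
    ∃ (A B : R[X]) (r : R), r ≠ 0 ∧ A * P + B * Q = C r :=
  exists_mul_add_mul_eq_C_of_isCoprime_map (K := FractionRing R) h.map_fractionRing.isCoprime

section Bivariate

variable {k : Type*} [Field k]

noncomputable def bivariateEquiv : MvPolynomial (Fin 2) k ≃ₐ[k] k[X][X] :=
  (MvPolynomial.finSuccEquiv k 1).trans (mapAlgEquiv (MvPolynomial.uniqueAlgEquiv k (Fin 1)))

theorem bivariateEquiv_X_one : bivariateEquiv (k := k) (MvPolynomial.X 1) = C X := by
  have h := MvPolynomial.finSuccEquiv_X_succ (R := k) (n := 1) (j := 0)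
  rw [Fin.succ_zero_eq_one] at h
  simp [bivariateEquiv, h]

theorem bivariateEquiv_symm_C (r : k[X]) :
    bivariateEquiv.symm (C r) = aeval (MvPolynomial.X 1) r := by
  rw [AlgEquiv.symm_apply_eq, ← aeval_algHom_apply, bivariateEquiv_X_one,
    ← algebraMap_eq (R := k[X]), aeval_algebraMap_apply, aeval_X_left_apply]

theorem IsRelPrime.exists_mul_add_mul_eq_aeval_X_one {p q : MvPolynomial (Fin 2) k}
    (h : IsRelPrime p q) :
    ∃ (A B : MvPolynomial (Fin 2) k) (r : k[X]), r ≠ 0 ∧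
      A * p + B * q = aeval (MvPolynomial.X 1) r := by
  classical
  have h' : IsRelPrime (bivariateEquiv p) (bivariateEquiv q) :=
    IsRelPrime.of_map bivariateEquiv.symm (by simpa using h)
  obtain ⟨A, B, r, hr, hAB⟩ := h'.exists_mul_add_mul_eq_C
  refine ⟨bivariateEquiv.symm A, bivariateEquiv.symm B, r, hr, ?_⟩
  rw [← bivariateEquiv_symm_C, ← hAB]
  simp

theorem IsRelPrime.exists_mul_add_mul_eq_aeval_X {p q : MvPolynomial (Fin 2) k}
    (h : IsRelPrime p q) (i : Fin 2) :
    ∃ (A B : MvPolynomial (Fin 2) k) (r : k[X]), r ≠ 0 ∧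
      A * p + B * q = aeval (MvPolynomial.X i) r := by
  fin_cases i
  · let σ := MvPolynomial.renameEquiv k (Equiv.swap (0 : Fin 2) 1)
    have h' : IsRelPrime (σ p) (σ q) := IsRelPrime.of_map σ.symm (by simpa using h)
    obtain ⟨A, B, r, hr, hAB⟩ := h'.exists_mul_add_mul_eq_aeval_X_one
    refine ⟨σ.symm A, σ.symm B, r, hr, ?_⟩
    have h'' := congrArg σ.symm hAB
    rw [map_add, map_mul, map_mul, σ.symm_apply_apply, σ.symm_apply_apply] at h''
    simpa [← aeval_algHom_apply, σ] using h''
  · exact h.exists_mul_add_mul_eq_aeval_X_one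

end Bivariate

theorem finite_setOf_not_isCoprime_comp {k : Type*} [Field k] {f r : k[X]} (hf : f ≠ 0)
    (hr : r ≠ 0) (c : k) : {b : k | ¬IsCoprime f (r.comp (C b + C c * X))}.Finite := by
  let K := AlgebraicClosure k
  refine (((f.rootSet_finite K).image2 (fun z w => w - algebraMap k K c * z)
    (r.rootSet_finite K)).preimage (algebraMap k K).injective.injOn).subset fun b hb => ?_
  obtain ⟨z, hfz, hrz⟩ : ∃ z : K, aeval z f = 0 ∧ aeval z (r.comp (C b + C c * X)) = 0 := by
    simpa [isCoprime_iff_aeval_ne_zero_of_isAlgClosed k K] using hb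
  refine ⟨z, mem_rootSet.2 ⟨hf, hfz⟩, algebraMap k K b + algebraMap k K c * z,
    mem_rootSet.2 ⟨hr, by simpa [aeval_comp] using hrz⟩, by ring⟩

theorem IsCoprime.of_isCoprime_mul_add_mul {R : Type*} [CommRing R] {p q A B A' B' : R}
    (h : IsCoprime (A * p + B * q) (A' * p + B' * q)) : IsCoprime p q := by
  obtain ⟨u, w, h⟩ := h
  exact ⟨u * A + w * A', u * B + w * B', by linear_combination h⟩

theorem IsRelPrime.exists_line_isCoprime_restrictToLine {k : Type*} [Field k] [Infinite k]
    {p q : MvPolynomial (Fin 2) k} (h : IsRelPrime p q) :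
    ∃ a v : Fin 2 → k, v ≠ 0 ∧ IsCoprime (restrictToLine a v p) (restrictToLine a v q) ∧
      (restrictToLine a v p).natDegree = p.totalDegree := by
  obtain ⟨A, B, r, hr, hABr⟩ := h.exists_mul_add_mul_eq_aeval_X 1
  obtain ⟨A', B', s, hs, hABs⟩ := h.exists_mul_add_mul_eq_aeval_X 0
  obtain ⟨v, hv0, hdeg⟩ := exists_direction_natDegree_restrictToLine_eq p 0
  have hs0 : s.comp (C 0 + C (v 0) * X) ≠ 0 := by
    simp [comp_eq_zero_iff, hs, hv0]
  obtain ⟨b, hb⟩ := (finite_setOf_not_isCoprime_comp hs0 hr (v 1)).exists_notMem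
  refine ⟨![0, b], v, fun hv => hv0 (by simp [hv]), ?_, hdeg _⟩
  have key : IsCoprime (restrictToLine ![0, b] v (A' * p + B' * q))
      (restrictToLine ![0, b] v (A * p + B * q)) := by
    rw [hABs, hABr, restrictToLine_aeval_X, restrictToLine_aeval_X]
    simpa using hb
  simp only [map_add, map_mul] at key
  exact key.of_isCoprime_mul_add_mul

/-- Given coprime polynomials `p`, `q` in two variables over `ℝ` with
`max (deg p) (deg q) = d'`, there is a line `t ↦ a + t • v` in `ℝ²` such that
the restrictions of `p` and `q` to it are coprime one-variable polynomials and
at least one of them has degree `d'`. -/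
theorem stmt_9 (d' : ℕ) (p q : MvPolynomial (Fin 2) ℝ)
    (hcop : ∀ D : MvPolynomial (Fin 2) ℝ, D ∣ p → D ∣ q → IsUnit D)
    (hdeg : max p.totalDegree q.totalDegree = d') :
    ∃ (a v : Fin 2 → ℝ), v ≠ 0 ∧
      IsCoprime
        (MvPolynomial.eval₂ Polynomial.C
          (fun i => Polynomial.C (a i) + Polynomial.C (v i) * Polynomial.X) p)
        (MvPolynomial.eval₂ Polynomial.C
          (fun i => Polynomial.C (a i) + Polynomial.C (v i) * Polynomial.X) q) ∧
      ((MvPolynomial.eval₂ Polynomial.C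
          (fun i => Polynomial.C (a i) + Polynomial.C (v i) * Polynomial.X) p).natDegree = d' ∨
       (MvPolynomial.eval₂ Polynomial.C
          (fun i => Polynomial.C (a i) + Polynomial.C (v i) * Polynomial.X) q).natDegree = d') := by
  rcases max_choice p.totalDegree q.totalDegree with hp | hq
  · obtain ⟨a, v, hv, hcop', hdeg'⟩ := IsRelPrime.exists_line_isCoprime_restrictToLine hcop
    exact ⟨a, v, hv, hcop', Or.inl (hdeg'.trans (hp ▸ hdeg))⟩
  · obtain ⟨a, v, hv, hcop', hdeg'⟩ :=
      IsRelPrime.exists_line_isCoprime_restrictToLine (IsRelPrime.symm hcop)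
    exact ⟨a, v, hv, hcop'.symm, Or.inr (hdeg'.trans (hq ▸ hdeg))⟩
end

section
/- Let P, Q, R be homogeneous polynomials of degree 3 in two variables over ℂ with no common nonconstant factor. Then the triple (P, Q, R) cannot satisfy Q·R = P² identically. -/
open MvPolynomial

private lemma sum_eq_degree (m : Fin 2 →₀ ℕ) : (m.sum fun _ e => e) = m.degree := rfl

private lemma hc_ne_zero {p : MvPolynomial (Fin 2) ℂ} (hp : p ≠ 0) :
    homogeneousComponent p.totalDegree p ≠ 0 := by
  obtain ⟨d, hd, hsup⟩ := Finset.exists_mem_eq_sup p.support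
    (MvPolynomial.support_nonempty.2 hp) (fun m => m.sum fun _ e => e)
  intro h
  have hdeg : d.degree = p.totalDegree := by
    rw [MvPolynomial.totalDegree, hsup, sum_eq_degree]
  have := coeff_homogeneousComponent (n := p.totalDegree) (φ := p) d
  rw [h, if_pos hdeg] at this
  exact (MvPolynomial.mem_support_iff.1 hd) this.symm

private lemma totalDegree_mul_eq {p q : MvPolynomial (Fin 2) ℂ} (hp : p ≠ 0) (hq : q ≠ 0) :
    (p * q).totalDegree = p.totalDegree + q.totalDegree := by
  refine le_antisymm (MvPolynomial.totalDegree_mul p q) ?_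
  set m := p.totalDegree
  set n := q.totalDegree
  set r := homogeneousComponent m p with hr
  set s := homogeneousComponent n q with hs
  have hrh : r.IsHomogeneous m := homogeneousComponent_isHomogeneous m p
  have hsh : s.IsHomogeneous n := homogeneousComponent_isHomogeneous n q
  have hrs : (r * s) ≠ 0 := mul_ne_zero (hc_ne_zero hp) (hc_ne_zero hq)
  obtain ⟨e, he⟩ : ∃ e, MvPolynomial.coeff e (r * s) ≠ 0 := by
    obtain ⟨e, he⟩ := MvPolynomial.support_nonempty.2 hrs
    exact ⟨e, MvPolynomial.mem_support_iff.1 he⟩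
  have hedeg : e.degree = m + n := by
    by_contra hed
    exact he ((hrh.mul hsh).coeff_eq_zero hed)
  have hcoeff : MvPolynomial.coeff e (p * q) = MvPolynomial.coeff e (r * s) := by
    rw [MvPolynomial.coeff_mul, MvPolynomial.coeff_mul]
    refine Finset.sum_congr rfl ?_
    rintro ⟨a, b⟩ hab
    have habe : a + b = e := Finset.HasAntidiagonal.mem_antidiagonal.1 hab
    have hdsum : a.degree + b.degree = m + n := by
      rw [← hedeg, ← habe]
      simp [Finsupp.degree_eq_weight_one, map_add]
    have ham : a.degree ≤ m ∨ MvPolynomial.coeff a p = 0 := by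
      by_cases h : MvPolynomial.coeff a p = 0
      · exact Or.inr h
      · left
        have := MvPolynomial.le_totalDegree (MvPolynomial.mem_support_iff.2 h)
        rwa [sum_eq_degree] at this
    have hbn : b.degree ≤ n ∨ MvPolynomial.coeff b q = 0 := by
      by_cases h : MvPolynomial.coeff b q = 0
      · exact Or.inr h
      · left
        have := MvPolynomial.le_totalDegree (MvPolynomial.mem_support_iff.2 h)
        rwa [sum_eq_degree] at this
    by_cases h1 : a.degree = m
    · have h2 : b.degree = n := by omega
      rw [hr, hs]
      simp [coeff_homogeneousComponent, h1, h2]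
    · -- one of the degrees is too big; both sides vanish
      have hcr : MvPolynomial.coeff a r = 0 := by
        have := coeff_homogeneousComponent (n := m) (φ := p) a
        rw [if_neg h1] at this
        rw [hr, this]
      rcases ham with ham | ham
      · rcases hbn with hbn | hbn
        · omega
        · have hcs : MvPolynomial.coeff b s = 0 := by
            rcases eq_or_ne b.degree n with h2 | h2
            · have := coeff_homogeneousComponent (n := n) (φ := q) b
              rw [if_pos h2, hbn] at this
              rw [hs, this]
            · have := coeff_homogeneousComponent (n := n) (φ := q) b
              rw [if_neg h2] at this
              rw [hs, this]
          rw [hbn, hcs, mul_zero, mul_zero]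
      · rw [ham, hcr, zero_mul, zero_mul]
  have : m + n ≤ (p * q).totalDegree := by
    have hmem : e ∈ (p * q).support := MvPolynomial.mem_support_iff.2 (hcoeff ▸ he)
    have := MvPolynomial.le_totalDegree hmem
    rwa [sum_eq_degree, hedeg] at this
  exact this

private lemma unit_totalDegree {u : MvPolynomial (Fin 2) ℂ} (hu : IsUnit u) :
    u.totalDegree = 0 := by
  obtain ⟨v, hv⟩ := hu.exists_right_inv
  have hu0 : u ≠ 0 := fun h => by simp [h] at hv
  have hv0 : v ≠ 0 := fun h => by simp [h] at hv
  have := totalDegree_mul_eq hu0 hv0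
  rw [hv, MvPolynomial.totalDegree_one] at this
  omega

/-- Homogeneous polynomials `P`, `Q`, `R` of degree 3 in two complex variables
with no common nonconstant factor cannot satisfy `Q * R = P ^ 2`. -/
theorem stmt_15 (P Q R : MvPolynomial (Fin 2) ℂ)
    (hP : P.IsHomogeneous 3) (hQ : Q.IsHomogeneous 3) (hR : R.IsHomogeneous 3)
    (hcop : ∀ D : MvPolynomial (Fin 2) ℂ, D ∣ P → D ∣ Q → D ∣ R → IsUnit D) :
    Q * R ≠ P ^ 2 := by
  intro hQR
  -- first, none of P, Q, R can be zero
  have hdeg3 : ∀ {S : MvPolynomial (Fin 2) ℂ}, S.IsHomogeneous 3 → S ≠ 0 →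
      S.totalDegree = 3 := fun hS h0 => hS.totalDegree h0
  have hPQ0 : ¬(P = 0 ∧ Q = 0) := by
    rintro ⟨hP0, hQ0⟩
    rcases eq_or_ne R 0 with hR0 | hR0
    · have := hcop (MvPolynomial.X 0) (hP0 ▸ dvd_zero _) (hQ0 ▸ dvd_zero _)
        (hR0 ▸ dvd_zero _)
      have := unit_totalDegree this
      rw [MvPolynomial.totalDegree_X] at this
      omega
    · have := unit_totalDegree (hcop R (hP0 ▸ dvd_zero _) (hQ0 ▸ dvd_zero _) dvd_rfl)
      rw [hdeg3 hR hR0] at this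
      omega
  have hPR0 : ¬(P = 0 ∧ R = 0) := by
    rintro ⟨hP0, hR0⟩
    rcases eq_or_ne Q 0 with hQ0 | hQ0
    · exact hPQ0 ⟨hP0, hQ0⟩
    · have := unit_totalDegree (hcop Q (hP0 ▸ dvd_zero _) dvd_rfl (hR0 ▸ dvd_zero _))
      rw [hdeg3 hQ hQ0] at this
      omega
  have hP0 : P ≠ 0 := by
    intro h
    rcases mul_eq_zero.1 (show Q * R = 0 by rw [hQR, h]; ring) with h1 | h1
    · exact hPQ0 ⟨h, h1⟩
    · exact hPR0 ⟨h, h1⟩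
  have hQ0 : Q ≠ 0 := by
    intro h
    apply hP0
    have : P ^ 2 = 0 := by rw [← hQR, h, zero_mul]
    exact pow_eq_zero_iff (n := 2) (by norm_num) |>.1 this
  have hR0 : R ≠ 0 := by
    intro h
    apply hP0
    have : P ^ 2 = 0 := by rw [← hQR, h, mul_zero]
    exact pow_eq_zero_iff (n := 2) (by norm_num) |>.1 this
  -- pass to Associates and use eq_pow_of_mul_eq_pow
  have hmk : Associates.mk Q * Associates.mk R = Associates.mk P ^ 2 := by
    rw [Associates.mk_mul_mk, ← Associates.mk_pow, hQR]
  have hnp : ∀ d : Associates (MvPolynomial (Fin 2) ℂ),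
      d ∣ Associates.mk Q → d ∣ Associates.mk R → ¬Prime d := by
    intro d hdQ hdR hd
    obtain ⟨d', rfl⟩ := Associates.mk_surjective d
    rw [Associates.prime_mk] at hd
    rw [Associates.mk_dvd_mk] at hdQ hdR
    have hdP : d' ∣ P := by
      have : d' ∣ P ^ 2 := hQR ▸ Dvd.dvd.mul_right hdQ R
      exact hd.dvd_of_dvd_pow this
    exact hd.not_unit (hcop d' hdP hdQ hdR)
  obtain ⟨d, hd⟩ := Associates.eq_pow_of_mul_eq_pow
    (Associates.mk_ne_zero.2 hQ0) (Associates.mk_ne_zero.2 hR0) hnp hmk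
  obtain ⟨A, rfl⟩ := Associates.mk_surjective d
  rw [← Associates.mk_pow, Associates.mk_eq_mk_iff_associated] at hd
  obtain ⟨u, hu⟩ := hd.symm
  have hA0 : A ≠ 0 := by
    rintro rfl
    rw [← hu] at hQ0
    simp at hQ0
  have hu0 : (u : MvPolynomial (Fin 2) ℂ) ≠ 0 := u.ne_zero
  have hdQ : Q.totalDegree = 3 := hdeg3 hQ hQ0
  have : Q.totalDegree = A.totalDegree + A.totalDegree + 0 := by
    rw [← hu, totalDegree_mul_eq (pow_ne_zero 2 hA0) hu0,
      unit_totalDegree u.isUnit, pow_two, totalDegree_mul_eq hA0 hA0]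
  omega
end
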